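/- Let V ∈ ℝ^{n×m}, S ∈ ℝ^{s×m}, λ > 0, and let V = L Q be a λ-LQ factorization (L Lᵀ = V Vᵀ + λ I_n, Q = L⁻¹ V). If ‖Q Sᵀ S Qᵀ − Q Qᵀ‖₂ ≤ 1/2, then (2/3)(V Sᵀ S Vᵀ + λ I_n) ⪯ V Vᵀ + λ I_n ⪯ 2(V Sᵀ S Vᵀ + λ I_n). -/

import Mathlib

/-!
Write `A = V Vᵀ + λ I = L Lᵀ` and `B = V Sᵀ S Vᵀ + λ I`. With `Q = L⁻¹ V`, the matrix
`E = Q (Sᵀ S - I) Qᵀ` is exactly the one in the hypothesis and `L E Lᵀ = B - A`. Since `E` is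
symmetric, `‖E‖₂ ≤ 1/2` gives `-I/2 ⪯ E ⪯ I/2`, and conjugating by `L` gives
`-A/2 ⪯ B - A ⪯ A/2`, which rearranges to `(2/3) B ⪯ A ⪯ 2 B`.
-/

open Matrix
open scoped Matrix.Norms.L2Operator

namespace Matrix

variable {n : Type*} [Fintype n] [DecidableEq n]

lemma abs_dotProduct_mulVec_le_l2_opNorm (A : Matrix n n ℝ) (x : n → ℝ) :
    |x ⬝ᵥ A *ᵥ x| ≤ ‖A‖ * (x ⬝ᵥ x) := by
  set y : EuclideanSpace ℝ n := WithLp.toLp 2 x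
  have hAy : (EuclideanSpace.equiv n ℝ).symm (A *ᵥ x) = WithLp.toLp 2 (A *ᵥ x) := rfl
  calc |x ⬝ᵥ A *ᵥ x| = |inner ℝ y (WithLp.toLp 2 (A *ᵥ x))| := by
        rw [EuclideanSpace.inner_toLp_toLp, dotProduct_comm]; rfl
    _ ≤ ‖y‖ * ‖WithLp.toLp 2 (A *ᵥ x)‖ := abs_real_inner_le_norm _ _
    _ ≤ ‖y‖ * (‖A‖ * ‖y‖) := by
        gcongr; rw [← hAy]; exact A.l2_opNorm_mulVec y
    _ = ‖A‖ * (x ⬝ᵥ x) := by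
        rw [mul_left_comm, ← real_inner_self_eq_norm_mul_norm, EuclideanSpace.inner_toLp_toLp]
        rfl

lemma posSemidef_smul_one_add_of_l2_opNorm_le {E : Matrix n n ℝ} (hE : E.IsHermitian) {a : ℝ}
    (h : ‖E‖ ≤ a) : (a • (1 : Matrix n n ℝ) + E).PosSemidef := by
  refine .of_dotProduct_mulVec_nonneg ((isHermitian_one.smul (.all a)).add hE) fun x ↦ ?_
  have hxx : 0 ≤ x ⬝ᵥ x := by simpa using dotProduct_star_self_nonneg x
  have := neg_le_of_abs_le ((abs_dotProduct_mulVec_le_l2_opNorm E x).trans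
    (mul_le_mul_of_nonneg_right h hxx))
  simpa [add_mulVec, smul_mulVec, dotProduct_add, add_comm] using neg_le_iff_add_nonneg.mp this

lemma posSemidef_smul_mul_transpose_add_smul_mul_mul_transpose (L : Matrix n n ℝ)
    {E : Matrix n n ℝ} (hE : E.IsHermitian) {a b : ℝ} (h : |b| * ‖E‖ ≤ a) :
    (a • (L * Lᵀ) + b • (L * E * Lᵀ)).PosSemidef := by
  have hbE : ‖b • E‖ ≤ a := by rwa [norm_smul, Real.norm_eq_abs]
  convert (posSemidef_smul_one_add_of_l2_opNorm_le (hE.smul (.all b)) hbE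
    |>.mul_mul_conjTranspose_same L) using 1
  simp only [Matrix.mul_add, Matrix.add_mul, Matrix.mul_smul, Matrix.smul_mul, Matrix.mul_one,
    conjTranspose_eq_transpose_of_trivial]

end Matrix

theorem precond_quality_general {n m s : ℕ} (V : Matrix (Fin n) (Fin m) ℝ)
    (S : Matrix (Fin s) (Fin m) ℝ) (lam : ℝ)
    (L : Matrix (Fin n) (Fin n) ℝ) (hL : IsUnit L.det)
    (hLL : L * Lᵀ = V * Vᵀ + lam • (1 : Matrix (Fin n) (Fin n) ℝ))
    (h : ‖(L⁻¹ * V) * Sᵀ * S * (L⁻¹ * V)ᵀ - (L⁻¹ * V) * (L⁻¹ * V)ᵀ‖ ≤ 1/2) :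
    ((V * Vᵀ + lam • (1 : Matrix (Fin n) (Fin n) ℝ))
        - (2/3 : ℝ) • (V * Sᵀ * S * Vᵀ + lam • (1 : Matrix (Fin n) (Fin n) ℝ))).PosSemidef ∧
    ((2 : ℝ) • (V * Sᵀ * S * Vᵀ + lam • (1 : Matrix (Fin n) (Fin n) ℝ))
        - (V * Vᵀ + lam • (1 : Matrix (Fin n) (Fin n) ℝ))).PosSemidef := by
  set Q := L⁻¹ * V
  have hLQ : L * Q = V := mul_nonsing_inv_cancel_left L V hL
  set E := Q * (Sᵀ * S - 1) * Qᵀ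
  have hE : ‖E‖ ≤ 1 / 2 := by
    simpa only [E, Matrix.mul_sub, Matrix.sub_mul, Matrix.one_mul, Matrix.mul_assoc] using h
  have hEH : E.IsHermitian := isHermitian_mul_mul_conjTranspose Q <|
    (isHermitian_conjTranspose_mul_self S).sub isHermitian_one
  have hLE : L * E * Lᵀ = V * Sᵀ * S * Vᵀ - V * Vᵀ := by
    rw [← hLQ]
    simp only [E, transpose_mul, Matrix.mul_sub, Matrix.sub_mul, Matrix.one_mul, Matrix.mul_assoc]
  have key (a b : ℝ) (hab : |b| / 2 ≤ a) :
      (a • (V * Vᵀ + lam • 1) + b • (V * Sᵀ * S * Vᵀ - V * Vᵀ)).PosSemidef := by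
    rw [← hLL, ← hLE]
    exact posSemidef_smul_mul_transpose_add_smul_mul_mul_transpose L hEH
      (by nlinarith [abs_nonneg b])
  constructor
  · convert key (1 / 3) (-2 / 3) (by norm_num [abs_of_neg]) using 1; module
  · convert key 1 2 (by norm_num) using 1; module

/-- If V = L Q is a λ-LQ factorization and ‖Q Sᵀ S Qᵀ − Q Qᵀ‖₂ ≤ 1/2 then
(2/3)(V Sᵀ S Vᵀ + λ Iₙ) ⪯ V Vᵀ + λ Iₙ ⪯ 2(V Sᵀ S Vᵀ + λ Iₙ). -/
theorem precond_quality {n m s : ℕ} (V : Matrix (Fin n) (Fin m) ℝ)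
    (S : Matrix (Fin s) (Fin m) ℝ) (lam : ℝ) (hlam : 0 < lam)
    (L : Matrix (Fin n) (Fin n) ℝ) (hL : IsUnit L.det)
    (hLL : L * Lᵀ = V * Vᵀ + lam • (1 : Matrix (Fin n) (Fin n) ℝ))
    (h : ‖(L⁻¹ * V) * Sᵀ * S * (L⁻¹ * V)ᵀ - (L⁻¹ * V) * (L⁻¹ * V)ᵀ‖ ≤ 1/2) :
    ((V * Vᵀ + lam • (1 : Matrix (Fin n) (Fin n) ℝ))
        - (2/3 : ℝ) • (V * Sᵀ * S * Vᵀ + lam • (1 : Matrix (Fin n) (Fin n) ℝ))).PosSemidef ∧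
    ((2 : ℝ) • (V * Sᵀ * S * Vᵀ + lam • (1 : Matrix (Fin n) (Fin n) ℝ))
        - (V * Vᵀ + lam • (1 : Matrix (Fin n) (Fin n) ℝ))).PosSemidef :=
  precond_quality_general V S lam L hL hLL h
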